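/- Let P be a Markov kernel on X^n with Wasserstein matrix W (all entries nonnegative). Then for any two probability measures μ, ν on X^n, any coupling Ψ of μ and ν, any bounded measurable f : X^n → ℝ, and any integer k ≥ 1: |∫ P^k f dμ − ∫ P^k f dν| ≤ Σ_{i,j∈I} osc_i(f)·(W^k)_{i,j}·Ψ({(x,z) : x_j ≠ z_j}) ≤ (Σ_{i∈I} osc_i(f))·‖W‖_∞^k·max_{j∈I} Ψ({(x,z) : x_j ≠ z_j}). -/

import Mathlib

open MeasureTheory ProbabilityTheory Finset
open scoped ENNReal

/-- Oscillation of `f` with respect to the `i`-th coordinate. -/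
noncomputable def osc {n : ℕ} {X : Type*} (i : Fin n) (f : (Fin n → X) → ℝ) : ℝ :=
  sSup {d : ℝ | ∃ x z : Fin n → X, (∀ k, k ≠ i → x k = z k) ∧ d = |f x - f z|}

/-- `W` is a Wasserstein matrix for the Markov kernel `P` on `X^n`. -/
def IsWassersteinMatrix {n : ℕ} {X : Type*} [MeasurableSpace X]
    (P : Kernel (Fin n → X) (Fin n → X)) (W : Matrix (Fin n) (Fin n) ℝ) : Prop :=
  (∀ i j, 0 ≤ W i j) ∧
  ∀ f : (Fin n → X) → ℝ, Measurable f → (∃ C, ∀ x, |f x| ≤ C) →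
    ∀ j, osc j (fun x => ∫ y, f y ∂(P x)) ≤ ∑ i, osc i f * W i j

/-- `Ψ` is a coupling of `μ` and `ν`. -/
def IsCoupling {E : Type*} [MeasurableSpace E] (Ψ : Measure (E × E)) (μ ν : Measure E) : Prop :=
  Ψ.map Prod.fst = μ ∧ Ψ.map Prod.snd = ν

/-- `k`-fold composition of a Markov kernel with itself. -/
noncomputable def kpow {E : Type*} [MeasurableSpace E] (P : Kernel E E) : ℕ → Kernel E E
  | 0 => Kernel.id
  | (k + 1) => P ∘ₖ kpow P k

/-- Maximum absolute row sum norm `‖A‖_∞`. -/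
noncomputable def rowNorm {n : ℕ} (A : Matrix (Fin n) (Fin n) ℝ) : ℝ :=
  ⨆ i, ∑ j, |A i j|

/-!
The coupling turns `∫ g dμ - ∫ g dν` into `∫ (g x - g z) dΨ(x, z)`, and changing the coordinates in
which `x` and `z` differ one at a time bounds `|g x - g z|` by the sum of the oscillations of `g` over
those coordinates. For `g = P^k f`, iterating the defining inequality of a Wasserstein matrix gives
`osc_j (P^k f) ≤ ∑ i, osc_i f * (W^k)_{ij}`. The second inequality is submultiplicativity of `‖·‖_∞`.
-/

section Oscillation

variable {n : ℕ} {X : Type*}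

lemma osc_nonneg (i : Fin n) (f : (Fin n → X) → ℝ) : 0 ≤ osc i f :=
  Real.sSup_nonneg fun _ ⟨_, _, _, hd⟩ => hd ▸ abs_nonneg _

lemma abs_sub_le_osc {f : (Fin n → X) → ℝ} {C : ℝ} (hC : ∀ x, |f x| ≤ C) (i : Fin n)
    {x z : Fin n → X} (h : ∀ k, k ≠ i → x k = z k) : |f x - f z| ≤ osc i f := by
  refine le_csSup ⟨C + C, ?_⟩ ⟨x, z, h, rfl⟩
  rintro d ⟨x, z, -, rfl⟩
  exact (abs_sub _ _).trans (add_le_add (hC x) (hC z))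

lemma abs_sub_le_sum_osc {f : (Fin n → X) → ℝ} {C : ℝ} (hC : ∀ x, |f x| ≤ C)
    (s : Finset (Fin n)) {x z : Fin n → X} (h : ∀ j ∉ s, x j = z j) :
    |f x - f z| ≤ ∑ j ∈ s, osc j f := by
  classical
  induction s using Finset.induction_on generalizing x with
  | empty =>
    obtain rfl : x = z := funext fun j => h j (Finset.notMem_empty j)
    simp
  | @insert i s hi ih =>
    set y := Function.update x i (z i)
    have hxy : |f x - f y| ≤ osc i f :=
      abs_sub_le_osc hC i fun k hk => (Function.update_of_ne hk _ _).symm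
    have hyz : |f y - f z| ≤ ∑ j ∈ s, osc j f := by
      refine ih fun j hj => ?_
      by_cases hji : j = i
      · subst hji; simp [y]
      · simp [y, Function.update_of_ne hji, h j (by simp [hji, hj])]
    calc |f x - f z| ≤ |f x - f y| + |f y - f z| := abs_sub_le _ _ _
      _ ≤ osc i f + ∑ j ∈ s, osc j f := add_le_add hxy hyz
      _ = ∑ j ∈ insert i s, osc j f := (Finset.sum_insert hi (f := fun j => osc j f)).symm

end Oscillation

lemma IsCoupling.abs_integral_sub_le_sum_osc {n : ℕ} {X : Type*} [MeasurableSpace X]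
    {μ ν : Measure (Fin n → X)} {Ψ : Measure ((Fin n → X) × (Fin n → X))} [IsFiniteMeasure Ψ]
    (hΨ : IsCoupling Ψ μ ν) {g : (Fin n → X) → ℝ} (hg : Measurable g) {C : ℝ}
    (hC : ∀ x, |g x| ≤ C) :
    |∫ x, g x ∂μ - ∫ x, g x ∂ν| ≤ ∑ j, osc j g * (Ψ {q | q.1 j ≠ q.2 j}).toReal := by
  classical
  -- the sets `{x_j ≠ z_j}` need not be measurable; their measurable hulls have the same measure
  set A : Fin n → Set ((Fin n → X) × (Fin n → X)) := fun j => toMeasurable Ψ {q | q.1 j ≠ q.2 j}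
  set b := fun q => ∑ j, (A j).indicator (fun _ => osc j g) q
  have hint : ∀ j, Integrable ((A j).indicator fun _ => osc j g) Ψ := fun j =>
    (integrable_const _).indicator (measurableSet_toMeasurable _ _)
  have hbound : ∀ q : (Fin n → X) × (Fin n → X), ‖g q.1 - g q.2‖ ≤ b q := fun q =>
    calc ‖g q.1 - g q.2‖ ≤ ∑ j with q.1 j ≠ q.2 j, osc j g :=
          abs_sub_le_sum_osc hC _ fun j hj => by simpa using hj
      _ = ∑ j, {q : (Fin n → X) × (Fin n → X) | q.1 j ≠ q.2 j}.indicator (fun _ => osc j g) q := by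
          simp only [Finset.sum_filter, Set.indicator_apply, Set.mem_ofPred_eq]
      _ ≤ b q := Finset.sum_le_sum fun j _ =>
          Set.indicator_le_indicator_of_subset (subset_toMeasurable _ _)
            (fun _ => osc_nonneg j g) q
  have hcomp : ∀ φ : (Fin n → X) × (Fin n → X) → Fin n → X, Measurable φ →
      Integrable (fun q => g (φ q)) Ψ := fun φ hφ =>
    .of_bound (hg.comp hφ).aestronglyMeasurable C (ae_of_all _ fun q => hC (φ q))
  calc |∫ x, g x ∂μ - ∫ x, g x ∂ν| = ‖∫ q, (g q.1 - g q.2) ∂Ψ‖ := by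
        rw [← hΨ.1, ← hΨ.2, integral_map measurable_fst.aemeasurable hg.aestronglyMeasurable,
          integral_map measurable_snd.aemeasurable hg.aestronglyMeasurable,
          integral_sub (hcomp _ measurable_fst) (hcomp _ measurable_snd), Real.norm_eq_abs]
    _ ≤ ∫ q, b q ∂Ψ := norm_integral_le_of_norm_le (integrable_finsetSum _ fun j _ => hint j)
          (ae_of_all _ hbound)
    _ = ∑ j, osc j g * (Ψ {q | q.1 j ≠ q.2 j}).toReal := by
        rw [integral_finsetSum _ fun j _ => hint j]
        refine Finset.sum_congr rfl fun j _ => ?_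
        rw [integral_indicator_const _ (measurableSet_toMeasurable _ _), measureReal_def,
          measure_toMeasurable, smul_eq_mul, mul_comm]

section KernelPower

variable {E : Type*} [MeasurableSpace E]

lemma abs_integral_le_of_forall_abs_le {μ : Measure E} [IsProbabilityMeasure μ] {f : E → ℝ}
    {C : ℝ} (hC : ∀ x, |f x| ≤ C) : |∫ x, f x ∂μ| ≤ C := by
  simpa using norm_integral_le_of_norm_le_const (μ := μ) (f := f) (ae_of_all _ hC)

instance kpow.isMarkovKernel (P : Kernel E E) [IsMarkovKernel P] (k : ℕ) :
    IsMarkovKernel (kpow P k) := by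
  induction k with
  | zero => rw [kpow]; infer_instance
  | succ k ih => rw [kpow]; infer_instance

lemma integral_kpow_succ (P : Kernel E E) [IsMarkovKernel P] (k : ℕ) {f : E → ℝ}
    (hf : Measurable f) {C : ℝ} (hC : ∀ x, |f x| ≤ C) (x : E) :
    ∫ y, f y ∂(kpow P (k + 1) x) = ∫ y, (∫ w, f w ∂(P y)) ∂(kpow P k x) :=
  Kernel.integral_comp (.of_bound hf.aestronglyMeasurable C (ae_of_all _ hC))

end KernelPower

lemma osc_integral_kpow_le {n : ℕ} {X : Type*} [MeasurableSpace X]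
    {P : Kernel (Fin n → X) (Fin n → X)} [IsMarkovKernel P] {W : Matrix (Fin n) (Fin n) ℝ}
    (hW : IsWassersteinMatrix P W) (k : ℕ) {f : (Fin n → X) → ℝ} (hf : Measurable f) {C : ℝ}
    (hC : ∀ x, |f x| ≤ C) (j : Fin n) :
    osc j (fun x => ∫ y, f y ∂(kpow P k x)) ≤ ∑ i, osc i f * (W ^ k) i j := by
  induction k generalizing f j with
  | zero =>
    have hid : (fun x => ∫ y, f y ∂(kpow P 0 x)) = f :=
      funext fun x => integral_dirac' f x hf.stronglyMeasurable
    simp [hid, Matrix.one_apply]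
  | succ k ih =>
    set g := fun y => ∫ w, f w ∂(P y)
    have hg : Measurable g := hf.stronglyMeasurable.integral_kernel.measurable
    have hgC : ∀ y, |g y| ≤ C := fun y => abs_integral_le_of_forall_abs_le hC
    calc osc j (fun x => ∫ y, f y ∂(kpow P (k + 1) x))
        = osc j (fun x => ∫ y, g y ∂(kpow P k x)) := by
          simp_rw [integral_kpow_succ P k hf hC, g]
      _ ≤ ∑ i, osc i g * (W ^ k) i j := ih hg hgC j
      _ ≤ ∑ i, (∑ l, osc l f * W l i) * (W ^ k) i j :=
          Finset.sum_le_sum fun i _ => mul_le_mul_of_nonneg_right (hW.2 f hf ⟨C, hC⟩ i)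
            (Matrix.pow_apply_nonneg hW.1 k i j)
      _ = ∑ l, osc l f * (W ^ (k + 1)) l j := by
          simp_rw [pow_succ', Matrix.mul_apply, Finset.sum_mul, Finset.mul_sum, mul_assoc]
          exact Finset.sum_comm

section RowNorm

variable {n : ℕ}

lemma rowNorm_nonneg (A : Matrix (Fin n) (Fin n) ℝ) : 0 ≤ rowNorm A :=
  Real.iSup_nonneg fun _ => Finset.sum_nonneg fun _ _ => abs_nonneg _

lemma sum_abs_le_rowNorm (A : Matrix (Fin n) (Fin n) ℝ) (i : Fin n) :
    ∑ j, |A i j| ≤ rowNorm A :=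
  le_ciSup (f := fun i => ∑ j, |A i j|) (Set.finite_range _).bddAbove i

lemma rowNorm_one_le : rowNorm (1 : Matrix (Fin n) (Fin n) ℝ) ≤ 1 :=
  Real.iSup_le (fun i => by simp [Matrix.one_apply, apply_ite]) zero_le_one

lemma rowNorm_mul_le (A B : Matrix (Fin n) (Fin n) ℝ) :
    rowNorm (A * B) ≤ rowNorm A * rowNorm B := by
  refine Real.iSup_le (fun i => ?_) (mul_nonneg (rowNorm_nonneg A) (rowNorm_nonneg B))
  calc ∑ j, |(A * B) i j| ≤ ∑ j, ∑ l, |A i l| * |B l j| := by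
        simp_rw [Matrix.mul_apply, ← abs_mul]
        exact Finset.sum_le_sum fun j _ => Finset.abs_sum_le_sum_abs _ _
    _ = ∑ l, |A i l| * ∑ j, |B l j| := by
        simp_rw [Finset.mul_sum]; exact Finset.sum_comm
    _ ≤ ∑ l, |A i l| * rowNorm B := Finset.sum_le_sum fun l _ =>
        mul_le_mul_of_nonneg_left (sum_abs_le_rowNorm B l) (abs_nonneg _)
    _ ≤ rowNorm A * rowNorm B := by
        rw [← Finset.sum_mul]
        exact mul_le_mul_of_nonneg_right (sum_abs_le_rowNorm A i) (rowNorm_nonneg B)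

lemma rowNorm_pow_le (A : Matrix (Fin n) (Fin n) ℝ) (k : ℕ) : rowNorm (A ^ k) ≤ rowNorm A ^ k := by
  induction k with
  | zero => simpa using rowNorm_one_le
  | succ k ih =>
    rw [pow_succ, pow_succ]
    exact (rowNorm_mul_le _ _).trans
      (mul_le_mul_of_nonneg_right ih (rowNorm_nonneg A))

lemma sum_sum_mul_le_rowNorm_mul_iSup (A : Matrix (Fin n) (Fin n) ℝ) {a q : Fin n → ℝ}
    (ha : ∀ i, 0 ≤ a i) (hq : ∀ j, 0 ≤ q j) :
    ∑ i, ∑ j, a i * A i j * q j ≤ (∑ i, a i) * rowNorm A * ⨆ j, q j := by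
  have hqM : ∀ j, q j ≤ ⨆ j, q j := le_ciSup (Set.finite_range _).bddAbove
  have hrow : ∀ i, ∑ j, A i j * q j ≤ rowNorm A * ⨆ j, q j := fun i =>
    calc ∑ j, A i j * q j ≤ ∑ j, |A i j| * ⨆ j, q j := Finset.sum_le_sum fun j _ =>
          mul_le_mul (le_abs_self _) (hqM j) (hq j) (abs_nonneg _)
      _ ≤ rowNorm A * ⨆ j, q j := by
          rw [← Finset.sum_mul]
          exact mul_le_mul_of_nonneg_right (sum_abs_le_rowNorm A i) (Real.iSup_nonneg hq)
  calc ∑ i, ∑ j, a i * A i j * q j = ∑ i, a i * ∑ j, A i j * q j := by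
        simp_rw [Finset.mul_sum, mul_assoc]
    _ ≤ ∑ i, a i * (rowNorm A * ⨆ j, q j) := Finset.sum_le_sum fun i _ =>
        mul_le_mul_of_nonneg_left (hrow i) (ha i)
    _ = (∑ i, a i) * rowNorm A * ⨆ j, q j := by rw [← Finset.sum_mul, mul_assoc]

end RowNorm

theorem stmt10_general {n : ℕ} {X : Type*} [MeasurableSpace X]
    (P : Kernel (Fin n → X) (Fin n → X)) [IsMarkovKernel P]
    (W : Matrix (Fin n) (Fin n) ℝ) (hW : IsWassersteinMatrix P W)
    (μ ν : Measure (Fin n → X))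
    (Ψ : Measure ((Fin n → X) × (Fin n → X))) [IsProbabilityMeasure Ψ]
    (hΨ : IsCoupling Ψ μ ν)
    (f : (Fin n → X) → ℝ) (hf : Measurable f) (hfb : ∃ C, ∀ x, |f x| ≤ C)
    (k : ℕ) :
    |(∫ x, (∫ y, f y ∂(kpow P k x)) ∂μ) - ∫ x, (∫ y, f y ∂(kpow P k x)) ∂ν| ≤
      ∑ i : Fin n, ∑ j : Fin n, osc i f * (W ^ k) i j * (Ψ {q | q.1 j ≠ q.2 j}).toReal ∧
    ∑ i : Fin n, ∑ j : Fin n, osc i f * (W ^ k) i j * (Ψ {q | q.1 j ≠ q.2 j}).toReal ≤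
      (∑ i : Fin n, osc i f) * rowNorm W ^ k * ⨆ j : Fin n, (Ψ {q | q.1 j ≠ q.2 j}).toReal := by
  obtain ⟨C, hC⟩ := hfb
  set Q := fun j : Fin n => (Ψ {q | q.1 j ≠ q.2 j}).toReal
  have hQ : ∀ j, 0 ≤ Q j := fun _ => ENNReal.toReal_nonneg
  constructor
  · calc _ ≤ ∑ j, osc j (fun x => ∫ y, f y ∂(kpow P k x)) * Q j :=
          hΨ.abs_integral_sub_le_sum_osc hf.stronglyMeasurable.integral_kernel.measurable
            fun x => abs_integral_le_of_forall_abs_le hC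
      _ ≤ ∑ j, (∑ i, osc i f * (W ^ k) i j) * Q j := Finset.sum_le_sum fun j _ =>
          mul_le_mul_of_nonneg_right (osc_integral_kpow_le hW k hf hC j) (hQ j)
      _ = ∑ i, ∑ j, osc i f * (W ^ k) i j * Q j := by
          simp_rw [Finset.sum_mul]; exact Finset.sum_comm
  · calc _ ≤ (∑ i, osc i f) * rowNorm (W ^ k) * ⨆ j, Q j :=
          sum_sum_mul_le_rowNorm_mul_iSup _ (fun i => osc_nonneg i f) hQ
      _ ≤ (∑ i, osc i f) * rowNorm W ^ k * ⨆ j, Q j := by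
          gcongr
          · exact Real.iSup_nonneg hQ
          · exact Finset.sum_nonneg fun i _ => osc_nonneg i f
          · exact rowNorm_pow_le W k

theorem stmt10 {n : ℕ} {X : Type*} [MeasurableSpace X] [StandardBorelSpace X]
    (P : Kernel (Fin n → X) (Fin n → X)) [IsMarkovKernel P]
    (W : Matrix (Fin n) (Fin n) ℝ) (hW : IsWassersteinMatrix P W)
    (μ ν : Measure (Fin n → X)) [IsProbabilityMeasure μ] [IsProbabilityMeasure ν]
    (Ψ : Measure ((Fin n → X) × (Fin n → X))) [IsProbabilityMeasure Ψ]
    (hΨ : IsCoupling Ψ μ ν)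
    (f : (Fin n → X) → ℝ) (hf : Measurable f) (hfb : ∃ C, ∀ x, |f x| ≤ C)
    (k : ℕ) (hk : 1 ≤ k) :
    |(∫ x, (∫ y, f y ∂(kpow P k x)) ∂μ) - ∫ x, (∫ y, f y ∂(kpow P k x)) ∂ν| ≤
      ∑ i : Fin n, ∑ j : Fin n, osc i f * (W ^ k) i j * (Ψ {q | q.1 j ≠ q.2 j}).toReal ∧
    ∑ i : Fin n, ∑ j : Fin n, osc i f * (W ^ k) i j * (Ψ {q | q.1 j ≠ q.2 j}).toReal ≤
      (∑ i : Fin n, osc i f) * rowNorm W ^ k * ⨆ j : Fin n, (Ψ {q | q.1 j ≠ q.2 j}).toReal :=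
  stmt10_general P W hW μ ν Ψ hΨ f hf hfb k
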